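/- Let G ⊆ ℝ³ be open, f : G → ℂ a C² nonvanishing solution of Δf = νf, and g : G → ℂ a C² solution of Δg = νg. Then the ℂ³-valued vector field F := f·grad(f^{-1}·g) satisfies the quaternionic equation D F + F·(Df/f) = 0 on G, i.e., div F = ⟨F, grad f/f⟩·(−1) combined with rot F + F × (grad f / f) = 0 — equivalently, writing F as a purely vectorial quaternion, (D + M^{Df/f})F = 0. -/

import Mathlib

open Quaternion

/-- Partial derivatives of complex-valued functions on `ℝ³`. -/
noncomputable def cpd1 (F : ℝ × ℝ × ℝ → ℂ) (p : ℝ × ℝ × ℝ) : ℂ :=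
  deriv (fun t => F (t, p.2.1, p.2.2)) p.1

noncomputable def cpd2 (F : ℝ × ℝ × ℝ → ℂ) (p : ℝ × ℝ × ℝ) : ℂ :=
  deriv (fun t => F (p.1, t, p.2.2)) p.2.1

noncomputable def cpd3 (F : ℝ × ℝ × ℝ → ℂ) (p : ℝ × ℝ × ℝ) : ℂ :=
  deriv (fun t => F (p.1, p.2.1, t)) p.2.2

/-- The Laplacian on `ℝ³` of a complex-valued function. -/
noncomputable def lap3 (F : ℝ × ℝ × ℝ → ℂ) (p : ℝ × ℝ × ℝ) : ℂ :=
  cpd1 (cpd1 F) p + cpd2 (cpd2 F) p + cpd3 (cpd3 F) p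

/-- Componentwise partial derivatives of a complex-quaternion–valued function. -/
noncomputable def qpd1 (F : ℝ × ℝ × ℝ → ℍ[ℂ]) (p : ℝ × ℝ × ℝ) : ℍ[ℂ] :=
  ⟨cpd1 (fun q => (F q).re) p, cpd1 (fun q => (F q).imI) p,
    cpd1 (fun q => (F q).imJ) p, cpd1 (fun q => (F q).imK) p⟩

noncomputable def qpd2 (F : ℝ × ℝ × ℝ → ℍ[ℂ]) (p : ℝ × ℝ × ℝ) : ℍ[ℂ] :=
  ⟨cpd2 (fun q => (F q).re) p, cpd2 (fun q => (F q).imI) p,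
    cpd2 (fun q => (F q).imJ) p, cpd2 (fun q => (F q).imK) p⟩

noncomputable def qpd3 (F : ℝ × ℝ × ℝ → ℍ[ℂ]) (p : ℝ × ℝ × ℝ) : ℍ[ℂ] :=
  ⟨cpd3 (fun q => (F q).re) p, cpd3 (fun q => (F q).imI) p,
    cpd3 (fun q => (F q).imJ) p, cpd3 (fun q => (F q).imK) p⟩

/-- The quaternion imaginary units. -/
def qi : ℍ[ℂ] := ⟨0, 1, 0, 0⟩
def qj : ℍ[ℂ] := ⟨0, 0, 1, 0⟩
def qk : ℍ[ℂ] := ⟨0, 0, 0, 1⟩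

/-- The Moisil–Teodorescu (Dirac) operator `D = i∂_x + j∂_y + k∂_z` acting
from the left on complex-quaternion–valued functions. -/
noncomputable def Dq (F : ℝ × ℝ × ℝ → ℍ[ℂ]) (p : ℝ × ℝ × ℝ) : ℍ[ℂ] :=
  qi * qpd1 F p + qj * qpd2 F p + qk * qpd3 F p

/-- Quaternionic conjugation: scalar part minus vector part. -/
def qconj (a : ℍ[ℂ]) : ℍ[ℂ] := ⟨a.re, -a.imI, -a.imJ, -a.imK⟩

/-- Componentwise `C¹` smoothness on a set for complex-quaternion–valued
functions. -/
def QContDiffOn (n : ℕ) (F : ℝ × ℝ × ℝ → ℍ[ℂ]) (G : Set (ℝ × ℝ × ℝ)) : Prop :=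
  ContDiffOn ℝ n (fun q => (F q).re) G ∧ ContDiffOn ℝ n (fun q => (F q).imI) G ∧
    ContDiffOn ℝ n (fun q => (F q).imJ) G ∧ ContDiffOn ℝ n (fun q => (F q).imK) G

namespace SD

abbrev E3 := ℝ × ℝ × ℝ

noncomputable def pdv : Fin 3 → (E3 → ℂ) → E3 → ℂ
  | 0 => cpd1 | 1 => cpd2 | 2 => cpd3

def ev : Fin 3 → E3 := ![(1,0,0), (0,1,0), (0,0,1)]

def coordv : Fin 3 → E3 → ℝ
  | 0 => fun p => p.1 | 1 => fun p => p.2.1 | 2 => fun p => p.2.2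

def linev : Fin 3 → E3 → ℝ → E3
  | 0 => fun p t => (t, p.2.1, p.2.2)
  | 1 => fun p t => (p.1, t, p.2.2)
  | 2 => fun p t => (p.1, p.2.1, t)

lemma pdv_zero : pdv 0 = cpd1 := rfl
lemma pdv_one : pdv 1 = cpd2 := rfl
lemma pdv_two : pdv 2 = cpd3 := rfl

lemma pdv_def (a : Fin 3) (F : E3 → ℂ) (p : E3) :
    pdv a F p = deriv (fun t => F (linev a p t)) (coordv a p) := by
  fin_cases a <;> rfl

lemma linev_at (a : Fin 3) (p : E3) : linev a p (coordv a p) = p := by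
  fin_cases a <;> rfl

lemma linev_hasDerivAt (a : Fin 3) (p : E3) (t : ℝ) :
    HasDerivAt (linev a p) (ev a) t := by
  fin_cases a
  · exact (hasDerivAt_id t).prodMk ((hasDerivAt_const t _).prodMk (hasDerivAt_const t _))
  · exact (hasDerivAt_const t _).prodMk ((hasDerivAt_id t).prodMk (hasDerivAt_const t _))
  · exact (hasDerivAt_const t _).prodMk ((hasDerivAt_const t _).prodMk (hasDerivAt_id t))

lemma linev_tendsto (a : Fin 3) (p : E3) :
    Filter.Tendsto (linev a p) (nhds (coordv a p)) (nhds p) := by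
  have h := (linev_hasDerivAt a p (coordv a p)).differentiableAt.continuousAt
  rwa [ContinuousAt, linev_at] at h

lemma hasDerivAt_comp_line {F : E3 → ℂ} {p : E3} (a : Fin 3)
    (h : DifferentiableAt ℝ F p) :
    HasDerivAt (fun t => F (linev a p t)) (fderiv ℝ F p (ev a)) (coordv a p) := by
  have hF : HasFDerivAt F (fderiv ℝ F p) (linev a p (coordv a p)) := by
    rw [linev_at]; exact h.hasFDerivAt
  exact hF.comp_hasDerivAt _ (linev_hasDerivAt a p _)

lemma pdv_eq {F : E3 → ℂ} {p : E3} (a : Fin 3) (h : DifferentiableAt ℝ F p) :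
    pdv a F p = fderiv ℝ F p (ev a) := by
  rw [pdv_def]; exact (hasDerivAt_comp_line a h).deriv

lemma pdv_congr {F F' : E3 → ℂ} {p : E3} (a : Fin 3) (h : F =ᶠ[nhds p] F') :
    pdv a F p = pdv a F' p := by
  rw [pdv_def, pdv_def]
  exact Filter.EventuallyEq.deriv_eq (h.comp_tendsto (linev_tendsto a p))

lemma pdv_mul {A B : E3 → ℂ} {p : E3} (a : Fin 3)
    (hA : DifferentiableAt ℝ A p) (hB : DifferentiableAt ℝ B p) :
    pdv a (fun q => A q * B q) p = pdv a A p * B p + A p * pdv a B p := by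
  rw [pdv_def, pdv_eq a hA, pdv_eq a hB]
  have := ((hasDerivAt_comp_line a hA).mul (hasDerivAt_comp_line a hB)).deriv
  rw [linev_at] at this; exact this

lemma pdv_add {A B : E3 → ℂ} {p : E3} (a : Fin 3)
    (hA : DifferentiableAt ℝ A p) (hB : DifferentiableAt ℝ B p) :
    pdv a (fun q => A q + B q) p = pdv a A p + pdv a B p := by
  rw [pdv_def, pdv_eq a hA, pdv_eq a hB]
  exact ((hasDerivAt_comp_line a hA).add (hasDerivAt_comp_line a hB)).deriv

section SecondDeriv

variable {G : Set E3} {h : E3 → ℂ} {p : E3}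
variable (hG : IsOpen G) (hh : ContDiffOn ℝ 2 h G) (hp : p ∈ G)
include hG hh hp

lemma diffAt : DifferentiableAt ℝ h p :=
  ((hh.differentiableOn (by norm_num)).differentiableAt (hG.mem_nhds hp))

lemma fderiv_hasFDerivAt :
    HasFDerivAt (fderiv ℝ h) (fderiv ℝ (fderiv ℝ h) p) p := by
  have h2 : ContDiffAt ℝ 1 (fderiv ℝ h) p :=
    (hh.contDiffAt (hG.mem_nhds hp)).fderiv_right (le_refl 2)
  exact (h2.differentiableAt one_ne_zero).hasFDerivAt

lemma apply_hasFDerivAt (b : E3) :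
    HasFDerivAt (fun q => fderiv ℝ h q b)
      ((ContinuousLinearMap.apply ℝ ℂ b).comp (fderiv ℝ (fderiv ℝ h) p)) p :=
  (ContinuousLinearMap.apply ℝ ℂ b).hasFDerivAt.comp p (fderiv_hasFDerivAt hG hh hp)

lemma snd_symm (v w : E3) :
    fderiv ℝ (fderiv ℝ h) p v w = fderiv ℝ (fderiv ℝ h) p w v := by
  have hev : ∀ᶠ q in nhds p, HasFDerivAt h (fderiv ℝ h q) q := by
    filter_upwards [hG.mem_nhds hp] with q hq
    exact (diffAt hG hh hq).hasFDerivAt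
  exact second_derivative_symmetric_of_eventually hev (fderiv_hasFDerivAt hG hh hp) v w

lemma pdv_eventually (b : Fin 3) :
    pdv b h =ᶠ[nhds p] fun q => fderiv ℝ h q (ev b) := by
  filter_upwards [hG.mem_nhds hp] with q hq
  exact pdv_eq b (diffAt hG hh hq)

lemma pdv_diffAt (b : Fin 3) : DifferentiableAt ℝ (pdv b h) p :=
  (Filter.EventuallyEq.differentiableAt_iff (pdv_eventually hG hh hp b)).mpr
    (apply_hasFDerivAt hG hh hp (ev b)).differentiableAt

lemma pdv_pdv (a b : Fin 3) :
    pdv a (pdv b h) p = fderiv ℝ (fderiv ℝ h) p (ev a) (ev b) := by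
  rw [pdv_congr a (pdv_eventually hG hh hp b),
    pdv_eq a (apply_hasFDerivAt hG hh hp (ev b)).differentiableAt,
    (apply_hasFDerivAt hG hh hp (ev b)).fderiv]
  rfl

lemma pdv_pdv_symm (a b : Fin 3) :
    pdv a (pdv b h) p = pdv b (pdv a h) p := by
  rw [pdv_pdv hG hh hp, pdv_pdv hG hh hp]
  exact snd_symm hG hh hp _ _

end SecondDeriv

lemma pdv_const0 (a : Fin 3) (p : E3) : pdv a (fun _ => (0:ℂ)) p = 0 := by
  fin_cases a <;> simp [pdv, cpd1, cpd2, cpd3]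

lemma cpd_const0 (pd : (E3 → ℂ) → E3 → ℂ)
    (hpd : pd = cpd1 ∨ pd = cpd2 ∨ pd = cpd3) (p : E3) :
    pd (fun _ => (0:ℂ)) p = 0 := by
  rcases hpd with h | h | h <;> subst h <;> simp [cpd1, cpd2, cpd3]

lemma mk_mul_re (a b c d e f g h : ℂ) :
    (@HMul.hMul ℍ[ℂ] ℍ[ℂ] ℍ[ℂ] _ ⟨a, b, c, d⟩ ⟨e, f, g, h⟩).re = a * e - b * f - c * g - d * h :=
  Quaternion.re_mul _ _

lemma mk_mul_imI (a b c d e f g h : ℂ) :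
    (@HMul.hMul ℍ[ℂ] ℍ[ℂ] ℍ[ℂ] _ ⟨a, b, c, d⟩ ⟨e, f, g, h⟩).imI = a * f + b * e + c * h - d * g :=
  Quaternion.imI_mul _ _

lemma mk_mul_imJ (a b c d e f g h : ℂ) :
    (@HMul.hMul ℍ[ℂ] ℍ[ℂ] ℍ[ℂ] _ ⟨a, b, c, d⟩ ⟨e, f, g, h⟩).imJ = a * g - b * h + c * e + d * f :=
  Quaternion.imJ_mul _ _

lemma mk_mul_imK (a b c d e f g h : ℂ) :
    (@HMul.hMul ℍ[ℂ] ℍ[ℂ] ℍ[ℂ] _ ⟨a, b, c, d⟩ ⟨e, f, g, h⟩).imK = a * h + b * g - c * f + d * e :=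
  Quaternion.imK_mul _ _

lemma Dq_coe (c : E3 → ℂ) (q : E3) :
    Dq (fun w => ((c w : ℂ) : ℍ[ℂ])) q = ⟨0, cpd1 c q, cpd2 c q, cpd3 c q⟩ := by
  have h1 : (fun w => (((c w : ℂ) : ℍ[ℂ])).re) = c := rfl
  have h2 : (fun w => (((c w : ℂ) : ℍ[ℂ])).imI) = fun _ => (0:ℂ) := rfl
  have h3 : (fun w => (((c w : ℂ) : ℍ[ℂ])).imJ) = fun _ => (0:ℂ) := rfl
  have h4 : (fun w => (((c w : ℂ) : ℍ[ℂ])).imK) = fun _ => (0:ℂ) := rfl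
  simp only [Dq, qpd1, qpd2, qpd3, h1, h2, h3, h4]
  ext <;>
    simp [qi, qj, qk, QuaternionAlgebra.re_mul, QuaternionAlgebra.imI_mul,
      QuaternionAlgebra.imJ_mul, QuaternionAlgebra.imK_mul, mk_mul_re, mk_mul_imI, mk_mul_imJ, mk_mul_imK,
      cpd_const0 cpd1 (Or.inl rfl), cpd_const0 cpd2 (Or.inr (Or.inl rfl)),
      cpd_const0 cpd3 (Or.inr (Or.inr rfl))]

lemma Dq_mk (A B C D : E3 → ℂ) (p : E3) :
    Dq (fun q => (⟨A q, B q, C q, D q⟩ : ℍ[ℂ])) p =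
      ⟨-(cpd1 B p + cpd2 C p + cpd3 D p),
        cpd1 A p + cpd2 D p - cpd3 C p,
        -cpd1 D p + cpd2 A p + cpd3 B p,
        cpd1 C p - cpd2 B p + cpd3 A p⟩ := by
  simp only [Dq, qpd1, qpd2, qpd3]
  ext <;>
    simp [qi, qj, qk, QuaternionAlgebra.re_mul, QuaternionAlgebra.imI_mul,
      QuaternionAlgebra.imJ_mul, QuaternionAlgebra.imK_mul, mk_mul_re, mk_mul_imI, mk_mul_imJ, mk_mul_imK] <;> ring

lemma coe_mul_quat (c : ℂ) (a : ℍ[ℂ]) :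
    (c : ℍ[ℂ]) * a = ⟨c * a.re, c * a.imI, c * a.imJ, c * a.imK⟩ := by
  ext <;>
    simp [QuaternionAlgebra.re_mul, QuaternionAlgebra.imI_mul,
      QuaternionAlgebra.imJ_mul, QuaternionAlgebra.imK_mul,
      QuaternionAlgebra.re_coe, QuaternionAlgebra.imI_coe,
      QuaternionAlgebra.imJ_coe, QuaternionAlgebra.imK_coe]

lemma mk_mulq_re (a b c d : ℂ) (y : ℍ[ℂ]) :
    (@HMul.hMul ℍ[ℂ] ℍ[ℂ] ℍ[ℂ] _ ⟨a, b, c, d⟩ y).re = a * y.re - b * y.imI - c * y.imJ - d * y.imK :=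
  Quaternion.re_mul _ _

lemma mk_add_re (a b c d : ℂ) (y : ℍ[ℂ]) :
    (@HAdd.hAdd ℍ[ℂ] ℍ[ℂ] ℍ[ℂ] _ ⟨a, b, c, d⟩ y).re = (⟨a, b, c, d⟩ : ℍ[ℂ]).re + y.re :=
  Quaternion.re_add _ _

lemma mk_mulq_imI (a b c d : ℂ) (y : ℍ[ℂ]) :
    (@HMul.hMul ℍ[ℂ] ℍ[ℂ] ℍ[ℂ] _ ⟨a, b, c, d⟩ y).imI = a * y.imI + b * y.re + c * y.imK - d * y.imJ :=
  Quaternion.imI_mul _ _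

lemma mk_add_imI (a b c d : ℂ) (y : ℍ[ℂ]) :
    (@HAdd.hAdd ℍ[ℂ] ℍ[ℂ] ℍ[ℂ] _ ⟨a, b, c, d⟩ y).imI = (⟨a, b, c, d⟩ : ℍ[ℂ]).imI + y.imI :=
  Quaternion.imI_add _ _

lemma mk_mulq_imJ (a b c d : ℂ) (y : ℍ[ℂ]) :
    (@HMul.hMul ℍ[ℂ] ℍ[ℂ] ℍ[ℂ] _ ⟨a, b, c, d⟩ y).imJ = a * y.imJ - b * y.imK + c * y.re + d * y.imI :=
  Quaternion.imJ_mul _ _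

lemma mk_add_imJ (a b c d : ℂ) (y : ℍ[ℂ]) :
    (@HAdd.hAdd ℍ[ℂ] ℍ[ℂ] ℍ[ℂ] _ ⟨a, b, c, d⟩ y).imJ = (⟨a, b, c, d⟩ : ℍ[ℂ]).imJ + y.imJ :=
  Quaternion.imJ_add _ _

lemma mk_mulq_imK (a b c d : ℂ) (y : ℍ[ℂ]) :
    (@HMul.hMul ℍ[ℂ] ℍ[ℂ] ℍ[ℂ] _ ⟨a, b, c, d⟩ y).imK = a * y.imK + b * y.imJ - c * y.imI + d * y.re :=
  Quaternion.imK_mul _ _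

lemma mk_add_imK (a b c d : ℂ) (y : ℍ[ℂ]) :
    (@HAdd.hAdd ℍ[ℂ] ℍ[ℂ] ℍ[ℂ] _ ⟨a, b, c, d⟩ y).imK = (⟨a, b, c, d⟩ : ℍ[ℂ]).imK + y.imK :=
  Quaternion.imK_add _ _

lemma coe_mul_mk (x a b c d : ℂ) :
    (@HMul.hMul ℍ[ℂ] ℍ[ℂ] ℍ[ℂ] _ (x : ℍ[ℂ]) ⟨a, b, c, d⟩) = ⟨x * a, x * b, x * c, x * d⟩ :=
  coe_mul_quat _ _

end SD

open SD

/-- Reduction of the 3D Schrödinger equation to a first-order quaternionic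
equation: if `Δf = νf` (`f` nonvanishing) and `Δg = νg`, then
`F = f·D(f⁻¹g)` (i.e. `f·grad(f⁻¹g)` as a purely vectorial quaternion)
satisfies `(D + M^{Df/f})F = 0`, i.e. `DF + F·(Df/f) = 0` on `G`. -/
theorem schrodinger_to_dirac_3d
    (G : Set (ℝ × ℝ × ℝ)) (hG : IsOpen G) (f ν g : ℝ × ℝ × ℝ → ℂ)
    (hf : ContDiffOn ℝ 2 f G) (hf0 : ∀ p ∈ G, f p ≠ 0)
    (hfe : ∀ p ∈ G, lap3 f p = ν p * f p)
    (hg : ContDiffOn ℝ 2 g G) (hge : ∀ p ∈ G, lap3 g p = ν p * g p) :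
    ∀ p ∈ G,
      Dq (fun q => (f q : ℍ[ℂ]) * Dq (fun w => (((f w)⁻¹ * g w : ℂ) : ℍ[ℂ])) q) p
        + ((f p : ℍ[ℂ]) * Dq (fun w => (((f w)⁻¹ * g w : ℂ) : ℍ[ℂ])) p)
          * ((((f p)⁻¹ : ℂ) : ℍ[ℂ]) * Dq (fun w => (f w : ℍ[ℂ])) p)
        = 0 := by
  intro p hp
  set u : E3 → ℂ := fun q => (f q)⁻¹ * g q with hu_def
  have hu : ContDiffOn ℝ 2 u G := (hf.inv hf0).mul hg
  -- rewrite the function under the outer Dq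
  have hfun : (fun q => (f q : ℍ[ℂ]) * Dq (fun w => (((f w)⁻¹ * g w : ℂ) : ℍ[ℂ])) q)
      = fun q => (⟨(0:ℂ), f q * cpd1 u q, f q * cpd2 u q, f q * cpd3 u q⟩ : ℍ[ℂ]) := by
    funext q
    rw [show (fun w => (((f w)⁻¹ * g w : ℂ) : ℍ[ℂ])) = fun w => ((u w : ℂ) : ℍ[ℂ]) from rfl,
      Dq_coe]
    erw [coe_mul_quat]
    simp
    rfl
  rw [hfun, Dq_mk, Dq_coe, Dq_coe]
  erw [coe_mul_quat]
  -- analytic facts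
  have hfp : f p ≠ 0 := hf0 p hp
  have hdf : ∀ q ∈ G, DifferentiableAt ℝ f q := fun q hq => SD.diffAt hG hf hq
  have hdu : ∀ q ∈ G, DifferentiableAt ℝ u q := fun q hq => SD.diffAt hG hu hq
  have hpdvu_diff : ∀ b : Fin 3, DifferentiableAt ℝ (pdv b u) p :=
    fun b => SD.pdv_diffAt hG hu hp b
  have hpdvf_diff : ∀ b : Fin 3, DifferentiableAt ℝ (pdv b f) p :=
    fun b => SD.pdv_diffAt hG hf hp b
  have key_mul : ∀ a b : Fin 3,
      pdv a (fun q => f q * pdv b u q) p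
        = pdv a f p * pdv b u p + f p * pdv a (pdv b u) p :=
    fun a b => SD.pdv_mul a (hdf p hp) (hpdvu_diff b)
  have symm_u : ∀ a b : Fin 3, pdv a (pdv b u) p = pdv b (pdv a u) p :=
    fun a b => SD.pdv_pdv_symm hG hu hp a b
  have prod2 : ∀ a : Fin 3,
      pdv a (pdv a g) p = pdv a (pdv a f) p * u p + pdv a f p * pdv a u p
        + pdv a f p * pdv a u p + f p * pdv a (pdv a u) p := by
    intro a
    have hgq : ∀ q ∈ G, pdv a g q = pdv a f q * u q + f q * pdv a u q := by
      intro q hq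
      have hev : g =ᶠ[nhds q] fun w => f w * u w := by
        filter_upwards [hG.mem_nhds hq] with w hw
        rw [hu_def]
        field_simp [hf0 w hw]
      rw [SD.pdv_congr a hev, SD.pdv_mul a (hdf q hq) (hdu q hq)]
    have h1 : pdv a (pdv a g) p
        = pdv a (fun q => pdv a f q * u q + f q * pdv a u q) p := by
      apply SD.pdv_congr a
      filter_upwards [hG.mem_nhds hp] with q hq
      exact hgq q hq
    rw [h1, SD.pdv_add (A := fun q => pdv a f q * u q) (B := fun q => f q * pdv a u q) a
        ((hpdvf_diff a).mul (hdu p hp)) ((hdf p hp).mul (hpdvu_diff a)),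
      SD.pdv_mul a (hpdvf_diff a) (hdu p hp), SD.pdv_mul a (hdf p hp) (hpdvu_diff a)]
    ring
  have fup : f p * u p = g p := by
    rw [hu_def]
    field_simp
  have lapg : pdv 0 (pdv 0 g) p + pdv 1 (pdv 1 g) p + pdv 2 (pdv 2 g) p = ν p * g p :=
    hge p hp
  have lapf : pdv 0 (pdv 0 f) p + pdv 1 (pdv 1 f) p + pdv 2 (pdv 2 f) p = ν p * f p :=
    hfe p hp
  have sum2 : 2 * (pdv 0 f p * pdv 0 u p + pdv 1 f p * pdv 1 u p + pdv 2 f p * pdv 2 u p)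
      + f p * (pdv 0 (pdv 0 u) p + pdv 1 (pdv 1 u) p + pdv 2 (pdv 2 u) p) = 0 := by
    linear_combination -(prod2 0) - prod2 1 - prod2 2 + lapg - u p * lapf - ν p * fup
  rw [← hu_def, Quaternion.ext_iff]
  refine ⟨?_, ?_, ?_, ?_⟩ <;>
    simp only [SD.coe_mul_quat, coe_mul_mk, mk_mul_re, mk_mul_imI, mk_mul_imJ, mk_mul_imK,
      mk_mulq_re, mk_mulq_imI, mk_mulq_imJ, mk_mulq_imK, mk_add_re, mk_add_imI, mk_add_imJ, mk_add_imK,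
      Quaternion.re_add, Quaternion.imI_add, Quaternion.imJ_add,
      Quaternion.imK_add, Quaternion.re_mul, Quaternion.imI_mul,
      Quaternion.imJ_mul, Quaternion.imK_mul, Quaternion.re_zero,
      Quaternion.imI_zero, Quaternion.imJ_zero, Quaternion.imK_zero]
  all_goals rw [show cpd1 = pdv 0 from rfl, show cpd2 = pdv 1 from rfl,
    show cpd3 = pdv 2 from rfl]
  · rw [key_mul 0 0, key_mul 1 1, key_mul 2 2]
    field_simp
    linear_combination (-1) * sum2
  · rw [SD.pdv_const0, key_mul 1 2, key_mul 2 1, symm_u 2 1]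
    field_simp
    ring
  · rw [SD.pdv_const0, key_mul 0 2, key_mul 2 0, symm_u 2 0]
    field_simp
    ring
  · rw [SD.pdv_const0, key_mul 0 1, key_mul 1 0, symm_u 1 0]
    field_simp
    ring
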